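/- Given n ≥ 3 and two Talenti bubbles U₁ = U[z₁,λ₁] and U₂ = U[z₂,λ₂] with λ₁ ≥ λ₂, there is a constant C(n) > 1 such that ∫_{B(z₁, λ₁⁻¹)} U₁^p U₂ ≤ ∫_{ℝⁿ} U₁^p U₂ ≤ C(n) ∫_{B(z₁, λ₁⁻¹)} U₁^p U₂; that is, the interaction integral ∫_{ℝⁿ} U₁^p U₂ is comparable to its restriction to the ball B(z₁, λ₁⁻¹). -/

import Mathlib

/-!
Localization of the interaction integral `∫ U₁^p U₂` on the ball `B(z₁, λ₁⁻¹)`.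
-/

open MeasureTheory Filter

noncomputable section

abbrev Rn (n : ℕ) := EuclideanSpace ℝ (Fin n)

/-- The exponent `p = (n+2)/(n-2)`. -/
def pExp (n : ℕ) : ℝ := ((n : ℝ) + 2) / ((n : ℝ) - 2)

/-- The Talenti bubble `U[z,λ]`. -/
def talenti (n : ℕ) (z : Rn n) (lam : ℝ) (x : Rn n) : ℝ :=
  ((n : ℝ) * ((n : ℝ) - 2)) ^ (((n : ℝ) - 2) / 4) * lam ^ (((n : ℝ) - 2) / 2) *
    (1 + lam ^ 2 * ‖x - z‖ ^ 2) ^ (-(((n : ℝ) - 2) / 2))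

/-!
With `a = (n-2)/2` the integrand is a constant times
`(1 + λ₁²|x-z₁|²)^(-(a+2)) (1 + λ₂²|x-z₂|²)^(-a)`; put `d = |z₁ - z₂|`. On `B(z₁, λ₁⁻¹)` both
factors are comparable to their values at `z₁`, so the ball integral is `≳ λ₁⁻ⁿ (1 + λ₂²d²)^(-a)`.
Off `B(z₂, d/2)` the second factor is `≲ (1 + λ₂²d²)^(-a)` while the first integrates to `≲ λ₁⁻ⁿ`.
On `B(z₂, d/2)`, which matters only when `λ₂d ≥ 1`, the first factor is `≲ (1 + λ₁²d²)^(-(a+2))`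
and the second, after borrowing two powers of `1 + λ₂²d²`, integrates to `≲ λ₂⁻ⁿ (1 + λ₂²d²)²`;
since `λ₂ ≤ λ₁` the product is again `≲ λ₁⁻ⁿ (1 + λ₂²d²)^(-a)`.
-/

open Metric Module

section Pointwise

variable {E : Type*} [NormedAddCommGroup E] {s lam : ℝ} {z x : E}

def bubbleProfile (s lam : ℝ) (z x : E) : ℝ := (1 + lam ^ 2 * ‖x - z‖ ^ 2) ^ (-s)

lemma bubbleProfile_nonneg (s lam : ℝ) (z x : E) : 0 ≤ bubbleProfile s lam z x :=
  Real.rpow_nonneg (by positivity) _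

lemma bubbleProfile_le_one (hs : 0 ≤ s) : bubbleProfile s lam z x ≤ 1 :=
  Real.rpow_le_one_of_one_le_of_nonpos (le_add_of_nonneg_right (by positivity)) (neg_nonpos.2 hs)

lemma continuous_bubbleProfile (s lam : ℝ) (z : E) : Continuous (bubbleProfile s lam z) :=
  (by fun_prop : Continuous fun x : E => 1 + lam ^ 2 * ‖x - z‖ ^ 2).rpow_const
    fun _ => Or.inl (by positivity)

lemma bubbleProfile_eq_rpow_mul (s t lam : ℝ) (z x : E) :
    bubbleProfile s lam z x = (1 + lam ^ 2 * ‖x - z‖ ^ 2) ^ t * bubbleProfile (s + t) lam z x := by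
  rw [bubbleProfile, bubbleProfile, ← Real.rpow_add (by positivity)]
  ring_nf

lemma rpow_neg_le_bubbleProfile {A : ℝ} (hs : 0 ≤ s) (h : 1 + lam ^ 2 * ‖x - z‖ ^ 2 ≤ A) :
    A ^ (-s) ≤ bubbleProfile s lam z x :=
  Real.rpow_le_rpow_of_nonpos (by positivity) h (neg_nonpos.2 hs)

lemma bubbleProfile_le_rpow_neg {A : ℝ} (hs : 0 ≤ s) (hA : 0 < A)
    (h : A ≤ 1 + lam ^ 2 * ‖x - z‖ ^ 2) : bubbleProfile s lam z x ≤ A ^ (-s) :=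
  Real.rpow_le_rpow_of_nonpos hA h (neg_nonpos.2 hs)

lemma bubbleProfile_le_of_half_le_norm {d : ℝ} (hs : 0 ≤ s) (hd : 0 ≤ d)
    (hx : d / 2 ≤ ‖x - z‖) : bubbleProfile s lam z x ≤ 4 ^ s * (1 + lam ^ 2 * d ^ 2) ^ (-s) := by
  have hd2 : d ^ 2 ≤ 4 * ‖x - z‖ ^ 2 := by nlinarith
  calc bubbleProfile s lam z x ≤ ((1 + lam ^ 2 * d ^ 2) / 4) ^ (-s) :=
        bubbleProfile_le_rpow_neg hs (by positivity) (by nlinarith [sq_nonneg lam])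
    _ = 4 ^ s * (1 + lam ^ 2 * d ^ 2) ^ (-s) := by
        rw [Real.div_rpow (by positivity) (by norm_num), Real.rpow_neg (by norm_num : (0:ℝ) ≤ 4),
          div_inv_eq_mul, mul_comm]

lemma rpow_neg_le_bubbleProfile_of_mem_ball {mu : ℝ} {w : E} (hs : 0 ≤ s) (hmu : 0 < mu)
    (hmulam : mu ≤ lam) (hx : x ∈ ball w lam⁻¹) :
    (3 * (1 + mu ^ 2 * ‖w - z‖ ^ 2)) ^ (-s) ≤ bubbleProfile s mu z x := by
  apply rpow_neg_le_bubbleProfile hs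
  have hxw : mu * ‖x - w‖ ≤ 1 := by
    rw [mem_ball, dist_eq_norm] at hx
    calc mu * ‖x - w‖ ≤ lam * lam⁻¹ := by gcongr; linarith
      _ = 1 := mul_inv_cancel₀ (hmu.trans_le hmulam).ne'
  have htri : mu * ‖x - z‖ ≤ mu * ‖x - w‖ + mu * ‖w - z‖ := by
    rw [← mul_add]
    gcongr
    exact norm_sub_le_norm_sub_add_norm_sub x w z
  nlinarith [sq_nonneg (mu * ‖w - z‖ - 1), mul_nonneg hmu.le (norm_nonneg (x - z))]

end Pointwise

lemma setIntegral_le_const_mul_integral {X : Type*} [MeasurableSpace X] {ν : Measure X}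
    {f g : X → ℝ} {S : Set X} {c : ℝ} (hS : MeasurableSet S) (hf : IntegrableOn f S ν)
    (hg : Integrable g ν) (hg0 : 0 ≤ g) (hc : 0 ≤ c) (hfg : ∀ x ∈ S, f x ≤ c * g x) :
    ∫ x in S, f x ∂ν ≤ c * ∫ x, g x ∂ν :=
  calc ∫ x in S, f x ∂ν ≤ ∫ x in S, c * g x ∂ν :=
        setIntegral_mono_on hf (hg.const_mul c).integrableOn hS hfg
    _ = c * ∫ x in S, g x ∂ν := integral_const_mul c _
    _ ≤ c * ∫ x, g x ∂ν :=
        mul_le_mul_of_nonneg_left (setIntegral_le_integral hg (Eventually.of_forall hg0)) hc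

section Integral

variable {E : Type*} [NormedAddCommGroup E] [NormedSpace ℝ E] {s lam : ℝ}

lemma bubbleProfile_eq_comp_smul (hlam : 0 ≤ lam) (z x : E) :
    bubbleProfile s lam z x = bubbleProfile s 1 0 (lam • (x - z)) := by
  rw [bubbleProfile, bubbleProfile, sub_zero, norm_smul, Real.norm_of_nonneg hlam]
  ring_nf

variable [FiniteDimensional ℝ E] [MeasurableSpace E] [BorelSpace E] (μ : Measure E)
  [μ.IsAddHaarMeasure]

lemma integrable_bubbleProfile (hs : (finrank ℝ E : ℝ) < 2 * s) (hlam : 0 < lam) (z : E) :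
    Integrable (bubbleProfile s lam z) μ := by
  have hunit : Integrable (bubbleProfile s 1 (0 : E)) μ := by
    convert integrable_rpow_neg_one_add_norm_sq (μ := μ) hs using 2 with y
    simp only [bubbleProfile, sub_zero, one_pow, one_mul]
    ring_nf
  exact (((integrable_comp_smul_iff μ _ hlam.ne').2 hunit).comp_sub_right z).congr (Eventually.of_forall fun x => (bubbleProfile_eq_comp_smul hlam.le z x).symm)

lemma integral_bubbleProfile (hlam : 0 ≤ lam) (z : E) :
    ∫ x, bubbleProfile s lam z x ∂μ = (lam ^ finrank ℝ E)⁻¹ * ∫ y, bubbleProfile s 1 0 y ∂μ := by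
  simp_rw [bubbleProfile_eq_comp_smul hlam z]
  rw [integral_sub_right_eq_self (fun v => bubbleProfile s 1 0 (lam • v)) z,
    Measure.integral_comp_smul_of_nonneg μ _ lam (hR := hlam), smul_eq_mul]

lemma integrable_bubbleProfile_mul {a b lam₁ : ℝ} (hb : (finrank ℝ E : ℝ) < 2 * b) (ha : 0 ≤ a)
    (hlam₁ : 0 < lam₁) (lam₂ : ℝ) (z₁ z₂ : E) :
    Integrable (fun x => bubbleProfile b lam₁ z₁ x * bubbleProfile a lam₂ z₂ x) μ := by
  refine (integrable_bubbleProfile μ hb hlam₁ z₁).mono'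
    ((continuous_bubbleProfile b lam₁ z₁).mul
      (continuous_bubbleProfile a lam₂ z₂)).aestronglyMeasurable (Eventually.of_forall fun x => ?_)
  rw [Real.norm_of_nonneg (mul_nonneg (bubbleProfile_nonneg ..) (bubbleProfile_nonneg ..))]
  exact mul_le_of_le_one_right (bubbleProfile_nonneg ..) (bubbleProfile_le_one ha)

end Integral

lemma one_add_sq_div_rpow_le {N : ℕ} {b lam₁ lam₂ d : ℝ} (hN : (N : ℝ) ≤ 2 * b)
    (hlam₂ : 0 < lam₂) (hle : lam₂ ≤ lam₁) (hd : 1 ≤ lam₂ * d) :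
    ((1 + lam₂ ^ 2 * d ^ 2) / (1 + lam₁ ^ 2 * d ^ 2)) ^ b ≤ 2 ^ b * (lam₂ / lam₁) ^ N := by
  have hlam₁ : 0 < lam₁ := hlam₂.trans_le hle
  have hb : 0 ≤ b := by linarith [N.cast_nonneg (α := ℝ)]
  set q := lam₂ / lam₁ with hq
  have hq0 : 0 < q := div_pos hlam₂ hlam₁
  have hq1 : q ≤ 1 := (div_le_one hlam₁).2 hle
  have hratio : (1 + lam₂ ^ 2 * d ^ 2) / (1 + lam₁ ^ 2 * d ^ 2) ≤ 2 * q ^ 2 := by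
    have hqlam : q ^ 2 * (1 + lam₁ ^ 2 * d ^ 2) = q ^ 2 + lam₂ ^ 2 * d ^ 2 := by
      rw [hq]; field_simp
    rw [div_le_iff₀ (by positivity), mul_assoc, hqlam]
    nlinarith [sq_nonneg q]
  calc ((1 + lam₂ ^ 2 * d ^ 2) / (1 + lam₁ ^ 2 * d ^ 2)) ^ b ≤ (2 * q ^ 2) ^ b :=
        Real.rpow_le_rpow (by positivity) hratio hb
    _ = 2 ^ b * (q ^ 2) ^ b := Real.mul_rpow (by norm_num) (by positivity)
    _ ≤ 2 ^ b * (q ^ 2) ^ ((N : ℝ) / 2) := mul_le_mul_of_nonneg_left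
        (Real.rpow_le_rpow_of_exponent_ge (by positivity) (pow_le_one₀ hq0.le hq1) (by linarith))
        (by positivity)
    _ = 2 ^ b * q ^ N := by
        rw [← Real.rpow_two, ← Real.rpow_mul hq0.le, ← Real.rpow_natCast]
        ring_nf

section Interaction

variable {E : Type*} [NormedAddCommGroup E] [NormedSpace ℝ E] [FiniteDimensional ℝ E]
  [MeasurableSpace E] [BorelSpace E] (μ : Measure E) [μ.IsAddHaarMeasure]
  {a lam₁ lam₂ : ℝ} {z₁ z₂ : E}

lemma mul_le_setIntegral_ball_bubbleProfile_mul (ha : 0 ≤ a) (hlam₂ : 0 < lam₂)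
    (hle : lam₂ ≤ lam₁) (hdim : (finrank ℝ E : ℝ) < 2 * (a + 2)) :
    3 ^ (-(2 * a + 2)) * (1 + lam₂ ^ 2 * ‖z₁ - z₂‖ ^ 2) ^ (-a) *
        ((lam₁ ^ finrank ℝ E)⁻¹ * μ.real (ball 0 1)) ≤
      ∫ x in ball z₁ lam₁⁻¹, bubbleProfile (a + 2) lam₁ z₁ x * bubbleProfile a lam₂ z₂ x ∂μ := by
  have hlam₁ : 0 < lam₁ := hlam₂.trans_le hle
  have hconst : 3 ^ (-(2 * a + 2)) * (1 + lam₂ ^ 2 * ‖z₁ - z₂‖ ^ 2) ^ (-a) =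
      (3 : ℝ) ^ (-(a + 2)) * (3 * (1 + lam₂ ^ 2 * ‖z₁ - z₂‖ ^ 2)) ^ (-a) := by
    rw [Real.mul_rpow (by norm_num) (by positivity), ← mul_assoc,
      ← Real.rpow_add (by norm_num)]
    ring_nf
  have hvol : μ.real (ball z₁ lam₁⁻¹) = (lam₁ ^ finrank ℝ E)⁻¹ * μ.real (ball 0 1) := by
    rw [measureReal_def, Measure.addHaar_ball_of_pos μ z₁ (inv_pos.2 hlam₁), ENNReal.toReal_mul,
      ENNReal.toReal_ofReal (by positivity), inv_pow, measureReal_def]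
  rw [← hvol, hconst]
  refine setIntegral_ge_of_const_le_real measurableSet_ball measure_ball_lt_top.ne
    (fun x hx => ?_) (integrable_bubbleProfile_mul μ hdim ha hlam₁ lam₂ z₁ z₂).integrableOn
  have h₁ := rpow_neg_le_bubbleProfile_of_mem_ball (s := a + 2) (z := z₁) (by linarith) hlam₁ le_rfl hx
  rw [sub_self, norm_zero, zero_pow two_ne_zero, mul_zero, add_zero, mul_one] at h₁
  exact mul_le_mul h₁ (rpow_neg_le_bubbleProfile_of_mem_ball ha hlam₂ hle hx)
    (by positivity) (bubbleProfile_nonneg ..)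


lemma integral_bubbleProfile_mul_le_of_mul_le_one (ha : 0 ≤ a) (hlam₁ : 0 < lam₁)
    (hlam₂ : 0 ≤ lam₂) (hdim : (finrank ℝ E : ℝ) < 2 * (a + 2)) (hd : lam₂ * ‖z₁ - z₂‖ ≤ 1) :
    ∫ x, bubbleProfile (a + 2) lam₁ z₁ x * bubbleProfile a lam₂ z₂ x ∂μ ≤
      2 ^ a * (1 + lam₂ ^ 2 * ‖z₁ - z₂‖ ^ 2) ^ (-a) *
        ((lam₁ ^ finrank ℝ E)⁻¹ * ∫ y, bubbleProfile (a + 2) 1 0 y ∂μ) := by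
  have hX : 1 ≤ 2 ^ a * (1 + lam₂ ^ 2 * ‖z₁ - z₂‖ ^ 2) ^ (-a) := by
    have h2 : (2 : ℝ) ^ (-a) ≤ (1 + lam₂ ^ 2 * ‖z₁ - z₂‖ ^ 2) ^ (-a) :=
      Real.rpow_le_rpow_of_nonpos (by positivity)
        (by nlinarith [mul_nonneg hlam₂ (norm_nonneg (z₁ - z₂))]) (neg_nonpos.2 ha)
    calc (1 : ℝ) = 2 ^ a * 2 ^ (-a) := by rw [← Real.rpow_add two_pos, add_neg_cancel, Real.rpow_zero]
      _ ≤ _ := by gcongr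
  have hJ : 0 ≤ ∫ y, bubbleProfile (a + 2) 1 0 y ∂μ := integral_nonneg (bubbleProfile_nonneg _ _ _)
  calc ∫ x, bubbleProfile (a + 2) lam₁ z₁ x * bubbleProfile a lam₂ z₂ x ∂μ
      ≤ ∫ x, bubbleProfile (a + 2) lam₁ z₁ x ∂μ :=
        integral_mono (integrable_bubbleProfile_mul μ hdim ha hlam₁ lam₂ z₁ z₂)
          (integrable_bubbleProfile μ hdim hlam₁ z₁)
          fun x => mul_le_of_le_one_right (bubbleProfile_nonneg ..) (bubbleProfile_le_one ha)
    _ = 1 * ((lam₁ ^ finrank ℝ E)⁻¹ * ∫ y, bubbleProfile (a + 2) 1 0 y ∂μ) := by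
        rw [one_mul, integral_bubbleProfile μ hlam₁.le]
    _ ≤ _ := by gcongr

lemma setIntegral_compl_ball_bubbleProfile_mul_le (ha : 0 ≤ a) (hlam₁ : 0 < lam₁)
    (hdim : (finrank ℝ E : ℝ) < 2 * (a + 2)) :
    ∫ x in (ball z₂ (‖z₁ - z₂‖ / 2))ᶜ, bubbleProfile (a + 2) lam₁ z₁ x * bubbleProfile a lam₂ z₂ x ∂μ ≤
      4 ^ a * (1 + lam₂ ^ 2 * ‖z₁ - z₂‖ ^ 2) ^ (-a) *
        ((lam₁ ^ finrank ℝ E)⁻¹ * ∫ y, bubbleProfile (a + 2) 1 0 y ∂μ) := by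
  rw [← integral_bubbleProfile μ hlam₁.le z₁]
  refine setIntegral_le_const_mul_integral measurableSet_ball.compl
    (integrable_bubbleProfile_mul μ hdim ha hlam₁ lam₂ z₁ z₂).integrableOn
    (integrable_bubbleProfile μ hdim hlam₁ z₁) (bubbleProfile_nonneg _ _ _) (by positivity)
    fun x hx => ?_
  rw [Set.mem_compl_iff, mem_ball, dist_eq_norm, not_lt] at hx
  rw [mul_comm]
  exact mul_le_mul_of_nonneg_right (bubbleProfile_le_of_half_le_norm ha (norm_nonneg _) hx)
    (bubbleProfile_nonneg ..)


lemma setIntegral_ball_bubbleProfile_mul_le (ha : 0 ≤ a) (hlam₂ : 0 < lam₂) (hle : lam₂ ≤ lam₁)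
    (hdim : (finrank ℝ E : ℝ) < 2 * (a + 2)) (hd : 1 ≤ lam₂ * ‖z₁ - z₂‖) :
    ∫ x in ball z₂ (‖z₁ - z₂‖ / 2), bubbleProfile (a + 2) lam₁ z₁ x * bubbleProfile a lam₂ z₂ x ∂μ ≤
      8 ^ (a + 2) * (1 + lam₂ ^ 2 * ‖z₁ - z₂‖ ^ 2) ^ (-a) *
        ((lam₁ ^ finrank ℝ E)⁻¹ * ∫ y, bubbleProfile (a + 2) 1 0 y ∂μ) := by
  have hlam₁ : 0 < lam₁ := hlam₂.trans_le hle
  set d := ‖z₁ - z₂‖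
  set X := 1 + lam₂ ^ 2 * d ^ 2
  set Y := 1 + lam₁ ^ 2 * d ^ 2
  set N := finrank ℝ E
  set J := ∫ y, bubbleProfile (a + 2) 1 0 y ∂μ
  have hJ : 0 ≤ J := integral_nonneg (bubbleProfile_nonneg _ _ _)
  have hpt : ∀ x ∈ ball z₂ (d / 2), bubbleProfile (a + 2) lam₁ z₁ x * bubbleProfile a lam₂ z₂ x ≤
      (4 ^ (a + 2) * Y ^ (-(a + 2)) * X ^ (2 : ℝ)) * bubbleProfile (a + 2) lam₂ z₂ x := by
    intro x hx
    rw [mem_ball, dist_eq_norm] at hx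
    have h₁ : bubbleProfile (a + 2) lam₁ z₁ x ≤ 4 ^ (a + 2) * Y ^ (-(a + 2)) := by
      refine bubbleProfile_le_of_half_le_norm (by linarith) (norm_nonneg _) ?_
      linarith [norm_sub_le_norm_sub_add_norm_sub z₁ x z₂, norm_sub_rev z₁ x]
    have h₂ : bubbleProfile a lam₂ z₂ x ≤ X ^ (2 : ℝ) * bubbleProfile (a + 2) lam₂ z₂ x := by
      rw [bubbleProfile_eq_rpow_mul a 2]
      refine mul_le_mul_of_nonneg_right (Real.rpow_le_rpow (by positivity) ?_ (by norm_num))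
        (bubbleProfile_nonneg ..)
      show _ ≤ 1 + lam₂ ^ 2 * d ^ 2
      gcongr
      linarith [norm_nonneg (z₁ - z₂)]
    calc bubbleProfile (a + 2) lam₁ z₁ x * bubbleProfile a lam₂ z₂ x
        ≤ (4 ^ (a + 2) * Y ^ (-(a + 2))) * (X ^ (2 : ℝ) * bubbleProfile (a + 2) lam₂ z₂ x) :=
          mul_le_mul h₁ h₂ (bubbleProfile_nonneg ..) (by positivity)
      _ = _ := by ring
  have hscale : Y ^ (-(a + 2)) * X ^ (2 : ℝ) * (lam₂ ^ N)⁻¹ ≤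
      2 ^ (a + 2) * X ^ (-a) * (lam₁ ^ N)⁻¹ :=
    calc Y ^ (-(a + 2)) * X ^ (2 : ℝ) * (lam₂ ^ N)⁻¹
        = X ^ (-a) * (X / Y) ^ (a + 2) * (lam₂ ^ N)⁻¹ := by
          rw [Real.div_rpow (by positivity) (by positivity), Real.rpow_neg (by positivity),
            Real.rpow_neg (by positivity), Real.rpow_add (show 0 < X by positivity)]
          field_simp
          rw [mul_div_mul_right _ _ (by positivity)]
      _ ≤ X ^ (-a) * (2 ^ (a + 2) * (lam₂ / lam₁) ^ N) * (lam₂ ^ N)⁻¹ := by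
          gcongr
          exact one_add_sq_div_rpow_le hdim.le hlam₂ hle hd
      _ = 2 ^ (a + 2) * X ^ (-a) * (lam₁ ^ N)⁻¹ := by
          rw [div_pow]
          field_simp
  calc ∫ x in ball z₂ (d / 2), bubbleProfile (a + 2) lam₁ z₁ x * bubbleProfile a lam₂ z₂ x ∂μ
      ≤ (4 ^ (a + 2) * Y ^ (-(a + 2)) * X ^ (2 : ℝ)) * ((lam₂ ^ N)⁻¹ * J) := by
        rw [← integral_bubbleProfile μ hlam₂.le z₂]
        exact setIntegral_le_const_mul_integral measurableSet_ball
          (integrable_bubbleProfile_mul μ hdim ha hlam₁ lam₂ z₁ z₂).integrableOn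
          (integrable_bubbleProfile μ hdim hlam₂ z₂) (bubbleProfile_nonneg _ _ _) (by positivity) hpt
    _ = 4 ^ (a + 2) * J * (Y ^ (-(a + 2)) * X ^ (2 : ℝ) * (lam₂ ^ N)⁻¹) := by ring
    _ ≤ 4 ^ (a + 2) * J * (2 ^ (a + 2) * X ^ (-a) * (lam₁ ^ N)⁻¹) := by gcongr
    _ = 8 ^ (a + 2) * X ^ (-a) * ((lam₁ ^ N)⁻¹ * J) := by
        rw [show (8 : ℝ) = 4 * 2 by norm_num, Real.mul_rpow (by norm_num) (by norm_num)]
        ring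


lemma integral_bubbleProfile_mul_le (ha : 0 ≤ a) (hlam₂ : 0 < lam₂) (hle : lam₂ ≤ lam₁)
    (hdim : (finrank ℝ E : ℝ) < 2 * (a + 2)) :
    ∫ x, bubbleProfile (a + 2) lam₁ z₁ x * bubbleProfile a lam₂ z₂ x ∂μ ≤
      (4 ^ a + 8 ^ (a + 2)) * (1 + lam₂ ^ 2 * ‖z₁ - z₂‖ ^ 2) ^ (-a) *
        ((lam₁ ^ finrank ℝ E)⁻¹ * ∫ y, bubbleProfile (a + 2) 1 0 y ∂μ) := by
  have hlam₁ : 0 < lam₁ := hlam₂.trans_le hle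
  have hJ : 0 ≤ ∫ y, bubbleProfile (a + 2) 1 0 y ∂μ := integral_nonneg (bubbleProfile_nonneg _ _ _)
  rcases le_total (lam₂ * ‖z₁ - z₂‖) 1 with hd | hd
  · refine (integral_bubbleProfile_mul_le_of_mul_le_one μ ha hlam₁ hlam₂.le hdim hd).trans ?_
    have h24 : (2 : ℝ) ^ a ≤ 4 ^ a + 8 ^ (a + 2) := by
      have : (2 : ℝ) ^ a ≤ 4 ^ a := Real.rpow_le_rpow (by norm_num) (by norm_num) ha
      linarith [Real.rpow_nonneg (by norm_num : (0 : ℝ) ≤ 8) (a + 2)]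
    gcongr
  · rw [← integral_add_compl measurableSet_ball
      (integrable_bubbleProfile_mul μ hdim ha hlam₁ lam₂ z₁ z₂)]
    exact (add_le_add (setIntegral_ball_bubbleProfile_mul_le μ ha hlam₂ hle hdim hd)
      (setIntegral_compl_ball_bubbleProfile_mul_le μ ha hlam₁ hdim)).trans_eq (by ring)

theorem exists_integral_bubbleProfile_mul_le_mul_setIntegral_ball (ha : 0 ≤ a)
    (hdim : (finrank ℝ E : ℝ) < 2 * (a + 2)) :
    ∃ C, 0 ≤ C ∧ ∀ (z₁ z₂ : E) (lam₁ lam₂ : ℝ), 0 < lam₂ → lam₂ ≤ lam₁ →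
      ∫ x, bubbleProfile (a + 2) lam₁ z₁ x * bubbleProfile a lam₂ z₂ x ∂μ ≤
        C * ∫ x in ball z₁ lam₁⁻¹, bubbleProfile (a + 2) lam₁ z₁ x * bubbleProfile a lam₂ z₂ x ∂μ := by
  set J := ∫ y, bubbleProfile (a + 2) 1 0 y ∂μ
  set v := μ.real (ball 0 1)
  have hJ : 0 ≤ J := integral_nonneg (bubbleProfile_nonneg _ _ _)
  have hv : 0 < v := ENNReal.toReal_pos (measure_ball_pos μ 0 one_pos).ne' measure_ball_lt_top.ne
  refine ⟨(4 ^ a + 8 ^ (a + 2)) * J * 3 ^ (2 * a + 2) / v, by positivity,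
    fun z₁ z₂ lam₁ lam₂ hlam₂ hle => ?_⟩
  calc ∫ x, bubbleProfile (a + 2) lam₁ z₁ x * bubbleProfile a lam₂ z₂ x ∂μ
      ≤ (4 ^ a + 8 ^ (a + 2)) * (1 + lam₂ ^ 2 * ‖z₁ - z₂‖ ^ 2) ^ (-a) *
          ((lam₁ ^ finrank ℝ E)⁻¹ * J) := integral_bubbleProfile_mul_le μ ha hlam₂ hle hdim
    _ = (4 ^ a + 8 ^ (a + 2)) * J * 3 ^ (2 * a + 2) / v *
          (3 ^ (-(2 * a + 2)) * (1 + lam₂ ^ 2 * ‖z₁ - z₂‖ ^ 2) ^ (-a) *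
            ((lam₁ ^ finrank ℝ E)⁻¹ * v)) := by
        rw [Real.rpow_neg (by norm_num : (0 : ℝ) ≤ 3) (2 * a + 2)]
        field_simp
    _ ≤ _ := by
        gcongr
        exact mul_le_setIntegral_ball_bubbleProfile_mul μ ha hlam₂ hle hdim

end Interaction

lemma talenti_rpow_pExp_mul_talenti {n : ℕ} (hn : 3 ≤ n) (z₁ z₂ : Rn n) {lam₁ lam₂ : ℝ}
    (hlam₁ : 0 ≤ lam₁) (hlam₂ : 0 ≤ lam₂) :
    ∃ K, 0 ≤ K ∧ ∀ x, talenti n z₁ lam₁ x ^ pExp n * talenti n z₂ lam₂ x =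
      K * (bubbleProfile (((n : ℝ) - 2) / 2 + 2) lam₁ z₁ x *
        bubbleProfile (((n : ℝ) - 2) / 2) lam₂ z₂ x) := by
  have hn' : (3 : ℝ) ≤ n := by exact_mod_cast hn
  set a := ((n : ℝ) - 2) / 2
  set c := ((n : ℝ) * ((n : ℝ) - 2)) ^ (((n : ℝ) - 2) / 4)
  have hc : 0 ≤ c := Real.rpow_nonneg (by nlinarith) _
  have hap : a * pExp n = a + 2 := by
    have : (n : ℝ) - 2 ≠ 0 := by linarith
    simp only [a, pExp]
    field_simp
    ring
  refine ⟨c ^ pExp n * lam₁ ^ (a + 2) * (c * lam₂ ^ a), by positivity, fun x => ?_⟩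
  have hprofile : bubbleProfile a lam₁ z₁ x ^ pExp n = bubbleProfile (a + 2) lam₁ z₁ x := by
    rw [bubbleProfile, bubbleProfile, ← Real.rpow_mul (by positivity), neg_mul, hap]
  rw [show talenti n z₁ lam₁ x = c * lam₁ ^ a * bubbleProfile a lam₁ z₁ x from rfl,
    show talenti n z₂ lam₂ x = c * lam₂ ^ a * bubbleProfile a lam₂ z₂ x from rfl,
    Real.mul_rpow (by positivity) (bubbleProfile_nonneg ..), Real.mul_rpow hc (by positivity),
    ← Real.rpow_mul hlam₁, hap, hprofile]
  ring

/-- For `n ≥ 3` there is `C(n) > 1` such that for two Talenti bubbles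
`U₁ = U[z₁,λ₁]`, `U₂ = U[z₂,λ₂]` with `λ₁ ≥ λ₂ > 0`:
`∫_{B(z₁,λ₁⁻¹)} U₁^p U₂ ≤ ∫_{ℝⁿ} U₁^p U₂ ≤ C(n) ∫_{B(z₁,λ₁⁻¹)} U₁^p U₂`. -/
theorem stmt18 (n : ℕ) (hn : 3 ≤ n) :
    ∃ C : ℝ, 1 < C ∧
      ∀ (z₁ z₂ : Rn n) (lam₁ lam₂ : ℝ), 0 < lam₂ → lam₂ ≤ lam₁ →
        (∫ x in Metric.ball z₁ lam₁⁻¹,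
            talenti n z₁ lam₁ x ^ pExp n * talenti n z₂ lam₂ x) ≤
          (∫ x : Rn n, talenti n z₁ lam₁ x ^ pExp n * talenti n z₂ lam₂ x) ∧
        (∫ x : Rn n, talenti n z₁ lam₁ x ^ pExp n * talenti n z₂ lam₂ x) ≤
          C * ∫ x in Metric.ball z₁ lam₁⁻¹,
            talenti n z₁ lam₁ x ^ pExp n * talenti n z₂ lam₂ x := by
  have hn' : (3 : ℝ) ≤ n := by exact_mod_cast hn
  have ha : 0 ≤ ((n : ℝ) - 2) / 2 := by linarith
  have hdim : (finrank ℝ (Rn n) : ℝ) < 2 * (((n : ℝ) - 2) / 2 + 2) := by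
    rw [finrank_euclideanSpace_fin]
    linarith
  obtain ⟨C, hC, hcompare⟩ :=
    exists_integral_bubbleProfile_mul_le_mul_setIntegral_ball volume ha hdim
  refine ⟨C + 2, by linarith, fun z₁ z₂ lam₁ lam₂ hlam₂ hle => ?_⟩
  have hlam₁ : 0 < lam₁ := hlam₂.trans_le hle
  obtain ⟨K, hK, hfactor⟩ := talenti_rpow_pExp_mul_talenti hn z₁ z₂ hlam₁.le hlam₂.le
  simp only [hfactor, integral_const_mul]
  have hball : 0 ≤ ∫ x in ball z₁ lam₁⁻¹, bubbleProfile (((n : ℝ) - 2) / 2 + 2) lam₁ z₁ x *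
      bubbleProfile (((n : ℝ) - 2) / 2) lam₂ z₂ x :=
    setIntegral_nonneg measurableSet_ball fun x _ =>
      mul_nonneg (bubbleProfile_nonneg ..) (bubbleProfile_nonneg ..)
  constructor
  · exact mul_le_mul_of_nonneg_left (setIntegral_le_integral
      (integrable_bubbleProfile_mul volume hdim ha hlam₁ lam₂ z₁ z₂)
      (Eventually.of_forall fun x => mul_nonneg (bubbleProfile_nonneg ..)
        (bubbleProfile_nonneg ..))) hK
  · have := mul_le_mul_of_nonneg_left (hcompare z₁ z₂ lam₁ lam₂ hlam₂ hle) hK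
    nlinarith
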